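/- Let b > 1 and n > 1 be integers and a a positive integer with gcd(r_b(n), a) = 1. For i = 2, …, n set α_i = a_i + (b−1)·∑_{j=i}^n a_j. Then: (a) α_i ∈ Ap(S_a(b,n), a_1) for every i = 2, …, n; (b) if a < b^n − 1 then α_2 > α_3 > … > α_n, and if a > b^n − 1 then α_2 < α_3 < … < α_n; (c) for each ω ∈ Ap(S_a(b,n), a_1) there exists i ∈ {2, …, n} such that ω ≤ α_i. -/

import Mathlib

/-- The repunit number in base `b` of length `ℓ`: `r_b(ℓ) = ∑_{j=0}^{ℓ-1} b^j`. -/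
def repunit (b ℓ : ℕ) : ℕ := ∑ j ∈ Finset.range ℓ, b ^ j

/-- The sequence `a_i = r_b(n) + a·r_b(i-1)`. -/
def aseq (b a n i : ℕ) : ℕ := repunit b n + a * repunit b (i - 1)

/-- The additive submonoid `S_a(b,n)` of `ℕ` generated by `{a_i : i ≥ 1}`. -/
def grep (b a n : ℕ) : AddSubmonoid ℕ :=
  AddSubmonoid.closure {x | ∃ i, 1 ≤ i ∧ x = aseq b a n i}

/-- The Apéry set of `S` with respect to `s`: elements `ω ∈ S` with `ω - s ∉ S`
(i.e. there is no `t ∈ S` with `ω = t + s`). -/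
def Apery (S : AddSubmonoid ℕ) (s : ℕ) : Set ℕ :=
  {ω | ω ∈ S ∧ ¬ ∃ t ∈ S, ω = t + s}

/-- `α_i = a_i + (b-1)·∑_{j=i}^n a_j`. -/
def alphaEl (b a n i : ℕ) : ℕ :=
  aseq b a n i + (b - 1) * ∑ j ∈ Finset.Icc i n, aseq b a n j

/-! ### Digit sums -/

/-- The base-`b` digit sum. -/
def sb (b x : ℕ) : ℕ := (Nat.digits b x).sum

lemma sb_eq {b : ℕ} (hb : 1 < b) (x : ℕ) : sb b x = x % b + sb b (x / b) := by
  rcases Nat.eq_zero_or_pos x with h | h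
  · simp [h, sb]
  · rw [sb, Nat.digits_def' hb h]; rfl

lemma sb_mul_base_add {b : ℕ} (hb : 1 < b) (x d : ℕ) (hd : d < b) :
    sb b (x * b + d) = d + sb b x := by
  have h1 : (x * b + d) % b = d := by
    rw [Nat.mul_add_mod' x b d, Nat.mod_eq_of_lt hd]
  have h2 : (x * b + d) / b = x := by
    rw [add_comm, Nat.add_mul_div_right _ _ (by omega : 0 < b), Nat.div_eq_of_lt hd, zero_add]
  rw [sb_eq hb (x * b + d), h1, h2]

lemma sb_le_self {b : ℕ} (hb : 1 < b) : ∀ x, sb b x ≤ x := by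
  intro x
  induction x using Nat.strong_induction_on with
  | _ x ih =>
    rcases Nat.eq_zero_or_pos x with h | h
    · simp [h, sb]
    · rw [sb_eq hb x]
      have h1 : x / b < x := Nat.div_lt_self h hb
      have := ih _ h1
      have h2 : x % b + (x / b) * b = x := Nat.mod_add_div' x b
      have h3 : x / b ≤ x / b * b := Nat.le_mul_of_pos_right _ (by omega)
      omega

lemma sb_one {b : ℕ} (hb : 1 < b) : sb b 1 = 1 := by
  have := sb_mul_base_add hb 0 1 hb
  simpa [sb] using this

lemma sb_pow {b : ℕ} (hb : 1 < b) (e : ℕ) : sb b (b ^ e) = 1 := by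
  induction e with
  | zero => simpa using sb_one hb
  | succ e ih =>
    have : b ^ (e + 1) = b ^ e * b + 0 := by ring
    rw [this, sb_mul_base_add hb _ 0 (by omega), ih]

lemma sb_add_le {b : ℕ} (hb : 1 < b) : ∀ N x y, x + y ≤ N → sb b (x + y) ≤ sb b x + sb b y := by
  intro N
  induction N with
  | zero =>
    intro x y h
    have hx : x = 0 := by omega
    have hy : y = 0 := by omega
    simp [hx, hy]
  | succ N ih =>
    intro x y h
    rcases Nat.eq_zero_or_pos (x + y) with h0 | h0
    · have hx : x = 0 := by omega
      have hy : y = 0 := by omega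
      simp [hx, hy]
    obtain ⟨x1, x0, hx0, rfl⟩ : ∃ x1 x0, x0 < b ∧ x = x1 * b + x0 := by
      refine ⟨x / b, x % b, Nat.mod_lt x (by omega), ?_⟩
      have := Nat.div_add_mod' x b
      omega
    obtain ⟨y1, y0, hy0, rfl⟩ : ∃ y1 y0, y0 < b ∧ y = y1 * b + y0 := by
      refine ⟨y / b, y % b, Nat.mod_lt y (by omega), ?_⟩
      have := Nat.div_add_mod' y b
      omega
    have hxd : sb b (x1 * b + x0) = x0 + sb b x1 := sb_mul_base_add hb _ _ hx0
    have hyd : sb b (y1 * b + y0) = y0 + sb b y1 := sb_mul_base_add hb _ _ hy0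
    have hbx : 2 * x1 ≤ x1 * b := by
      calc 2 * x1 = x1 * 2 := by ring
        _ ≤ x1 * b := Nat.mul_le_mul_left x1 hb
    have hby : 2 * y1 ≤ y1 * b := by
      calc 2 * y1 = y1 * 2 := by ring
        _ ≤ y1 * b := Nat.mul_le_mul_left y1 hb
    by_cases hc : x0 + y0 < b
    · have hd : (x1 + y1) * b = x1 * b + y1 * b := by ring
      have hxy : x1 * b + x0 + (y1 * b + y0) = (x1 + y1) * b + (x0 + y0) := by omega
      rw [hxy, sb_mul_base_add hb _ _ hc]
      have := ih x1 y1 (by omega)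
      omega
    · have hd : (x1 + y1 + 1) * b = x1 * b + y1 * b + b := by ring
      have hxy : x1 * b + x0 + (y1 * b + y0) = (x1 + y1 + 1) * b + (x0 + y0 - b) := by omega
      have hlb : x0 + y0 - b < b := by omega
      rw [hxy, sb_mul_base_add hb _ _ hlb]
      have i1 := ih (x1 + y1) 1 (by omega)
      have i2 := ih x1 y1 (by omega)
      rw [sb_one hb] at i1
      omega

lemma sb_add_le' {b : ℕ} (hb : 1 < b) (x y : ℕ) : sb b (x + y) ≤ sb b x + sb b y :=
  sb_add_le hb (x + y) x y le_rfl

lemma sb_list {b : ℕ} (hb : 1 < b) (L : List ℕ) :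
    sb b ((L.map (b ^ ·)).sum) ≤ L.length := by
  induction L with
  | nil => simp [sb]
  | cons e L ih =>
    simp only [List.map_cons, List.sum_cons, List.length_cons]
    calc sb b (b ^ e + (L.map (b ^ ·)).sum) ≤ sb b (b ^ e) + sb b ((L.map (b ^ ·)).sum) :=
          sb_add_le' hb _ _
      _ ≤ L.length + 1 := by have := sb_pow hb e; omega

lemma sb_allnines {b : ℕ} (hb : 1 < b) :
    ∀ (j q : ℕ), sb b (q * b ^ j + (b ^ j - 1)) = sb b q + j * (b - 1) := by
  intro j
  induction j with
  | zero => intro q; simp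
  | succ j ih =>
    intro q
    have hb1 : 0 < b ^ j := Nat.pow_pos (by omega)
    have key : q * b ^ (j+1) + (b ^ (j+1) - 1) = (q * b ^ j + (b ^ j - 1)) * b + (b - 1) := by
      have h1 : b ^ (j+1) = b ^ j * b := by ring
      rw [h1]
      have h2 : (q * b ^ j + (b ^ j - 1)) * b = q * (b ^ j * b) + (b ^ j - 1) * b := by
        rw [Nat.add_mul, mul_assoc]
      have h3 : (b ^ j - 1) * b = b ^ j * b - b := by rw [Nat.sub_mul, one_mul]
      have h4 : b ≤ b ^ j * b := Nat.le_mul_of_pos_left b hb1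
      have h5 : q * (b ^ j * b) = q * b ^ j * b := by ring
      omega
    rw [key, sb_mul_base_add hb _ _ (by omega), ih]
    ring

/-! ### Repunits and the semigroup -/

lemma repunit_zero (b : ℕ) : repunit b 0 = 0 := by simp [repunit]

lemma repunit_succ (b k : ℕ) : repunit b (k + 1) = b * repunit b k + 1 := by
  simp only [repunit]
  exact geom_sum_succ

lemma repunit_one (b : ℕ) : repunit b 1 = 1 := by
  rw [repunit_succ, repunit_zero]; ring

lemma repunit_pos {b : ℕ} (hb : 1 < b) (k : ℕ) (hk : 1 ≤ k) : 1 ≤ repunit b k := by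
  obtain ⟨k', rfl⟩ : ∃ k', k = k' + 1 := ⟨k - 1, by omega⟩
  rw [repunit_succ]; omega

lemma repunit_mul {b : ℕ} (hb : 1 < b) (k : ℕ) : (b - 1) * repunit b k + 1 = b ^ k := by
  induction k with
  | zero => simp [repunit_zero]
  | succ k ih =>
    rw [repunit_succ]
    set R := repunit b k with hR
    have h1 : (b - 1) * (b * R + 1) = b * ((b - 1) * R) + (b - 1) := by ring
    have h2 : b * ((b - 1) * R) + b = b * ((b - 1) * R + 1) := by ring
    have h3 : b * ((b - 1) * R + 1) = b ^ (k + 1) := by rw [ih]; ring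
    omega

lemma aseq_one (b a n : ℕ) : aseq b a n 1 = repunit b n := by
  simp [aseq, repunit_zero]

lemma aseq_mem {b a n : ℕ} (i : ℕ) (hi : 1 ≤ i) : aseq b a n i ∈ grep b a n :=
  AddSubmonoid.subset_closure ⟨i, hi, rfl⟩

lemma repunit_mem (b a n : ℕ) : repunit b n ∈ grep b a n := by
  rw [← aseq_one b a n]; exact aseq_mem 1 le_rfl

lemma mul_mem_grep {b a n x : ℕ} (c : ℕ) (hx : x ∈ grep b a n) : c * x ∈ grep b a n := by
  induction c with
  | zero => simpa using AddSubmonoid.zero_mem _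
  | succ c ih =>
    rw [Nat.succ_mul]
    exact AddSubmonoid.add_mem _ ih hx

/-- Every element of `grep` is `len·m + a·T` where `(b-1)T + len` is a sum of `len`
powers of `b`. -/
lemma grep_repr {b a n x : ℕ} (hb : 1 < b) (hx : x ∈ grep b a n) :
    ∃ (T : ℕ) (L : List ℕ), x = L.length * repunit b n + a * T ∧
      (L.map (b ^ ·)).sum = (b - 1) * T + L.length := by
  induction hx using AddSubmonoid.closure_induction with
  | mem x hxs =>
    obtain ⟨i, hi, rfl⟩ := hxs
    refine ⟨repunit b (i - 1), [i - 1], by simp [aseq], ?_⟩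
    have := repunit_mul hb (i - 1)
    simp
    omega
  | zero => exact ⟨0, [], by simp, by simp⟩
  | add x y hx hy ihx ihy =>
    obtain ⟨T1, L1, he1, hs1⟩ := ihx
    obtain ⟨T2, L2, he2, hs2⟩ := ihy
    refine ⟨T1 + T2, L1 ++ L2, ?_, ?_⟩
    · rw [he1, he2, List.length_append]; ring
    · rw [List.map_append, List.sum_append, hs1, hs2, List.length_append]; ring

/-! ### The elements `α_i` -/

lemma icc_split {n i : ℕ} (hin : i ≤ n) (f : ℕ → ℕ) :
    ∑ j ∈ Finset.Icc i n, f j = f i + ∑ j ∈ Finset.Icc (i + 1) n, f j := by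
  rw [Finset.Icc_eq_cons_Ioc hin, Finset.sum_cons, Finset.Icc_add_one_left_eq_Ioc]

lemma alpha_split {b a n i : ℕ} (hb : 1 ≤ b) (hin : i ≤ n) :
    alphaEl b a n i = b * aseq b a n i + (b - 1) * ∑ j ∈ Finset.Icc (i + 1) n, aseq b a n j := by
  rw [alphaEl, icc_split hin, Nat.mul_add]
  have : aseq b a n i + (b - 1) * aseq b a n i = b * aseq b a n i := by
    have h : 1 * aseq b a n i + (b - 1) * aseq b a n i = (1 + (b - 1)) * aseq b a n i := by ring
    have h2 : 1 + (b - 1) = b := by omega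
    rw [h2] at h
    omega
  omega

lemma base_step {b a n : ℕ} (hb : 1 < b) (i : ℕ) (hi : 1 ≤ i) :
    b * aseq b a n i + a = aseq b a n (i + 1) + (b - 1) * repunit b n := by
  obtain ⟨i', rfl⟩ : ∃ i', i = i' + 1 := ⟨i - 1, by omega⟩
  have h1 : (i' + 1 + 1) - 1 = i' + 1 := by omega
  have h2 : (i' + 1) - 1 = i' := by omega
  rw [aseq, aseq, h1, h2, repunit_succ b i']
  set R := repunit b i'
  set M := repunit b n
  have e1 : b * (M + a * R) = b * M + a * (b * R) := by ring
  have e2 : a * (b * R + 1) = a * (b * R) + a := by ring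
  have e3 : b * M = (b - 1) * M + M := by
    have : (b - 1) * M + 1 * M = ((b - 1) + 1) * M := by ring
    have hb1 : (b - 1) + 1 = b := by omega
    rw [hb1] at this
    omega
  omega

lemma alpha_step {b a n i : ℕ} (hb : 1 < b) (hi : 1 ≤ i) (hlt : i < n) :
    alphaEl b a n i + a = alphaEl b a n (i + 1) + (b - 1) * repunit b n := by
  rw [alpha_split (by omega) (le_of_lt hlt), alphaEl]
  have := base_step (a := a) (n := n) hb i hi
  omega

/-- Closed form: `α_{n-d} + a(d+1) = (b + (b-1)d)·m + a·m`. -/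
lemma alpha_closed {b a n : ℕ} (hb : 1 < b) (hn : 1 ≤ n) :
    ∀ d, d ≤ n - 1 → alphaEl b a n (n - d) + a * (d + 1)
      = (b + (b - 1) * d) * repunit b n + a * repunit b n := by
  intro d
  induction d with
  | zero =>
    intro _
    simp only [Nat.sub_zero, Nat.mul_one, Nat.mul_zero, Nat.add_zero]
    have h1 : alphaEl b a n n = b * aseq b a n n := by
      rw [alpha_split (by omega) le_rfl]
      have : Finset.Icc (n + 1) n = ∅ := by
        rw [Finset.Icc_eq_empty_iff]; omega
      rw [this]
      simp
    obtain ⟨m, rfl⟩ : ∃ m, n = m + 1 := ⟨n - 1, by omega⟩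
    have hm : (m + 1) - 1 = m := by omega
    rw [h1]
    simp only [aseq, hm]
    have h2 : repunit b (m + 1) = b * repunit b m + 1 := repunit_succ b m
    set R := repunit b m
    set M := repunit b (m + 1)
    rw [h2]
    ring
  | succ d ih =>
    intro hd
    have hd' : d ≤ n - 1 := by omega
    have hi1 : 1 ≤ n - (d + 1) := by omega
    have hlt : n - (d + 1) < n := by omega
    have hstep := alpha_step (a := a) hb hi1 hlt
    have hsucc : n - (d + 1) + 1 = n - d := by omega
    rw [hsucc] at hstep
    have := ih hd'
    set M := repunit b n
    have e1 : a * (d + 1 + 1) = a * (d + 1) + a := by ring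
    have e2 : (b + (b - 1) * (d + 1)) * M = (b + (b - 1) * d) * M + (b - 1) * M := by ring
    omega

lemma alpha_compare {b a n : ℕ} (hb : 1 < b) :
    ∀ i j, 1 ≤ i → i < j → j ≤ n →
      alphaEl b a n i + (j - i) * a = alphaEl b a n j + (j - i) * ((b - 1) * repunit b n) := by
  intro i j hi hij hjn
  induction j with
  | zero => omega
  | succ j ih =>
    rcases Nat.lt_or_ge i j with h | h
    · have := ih h (by omega)
      have hstep := alpha_step (a := a) hb (by omega : 1 ≤ j) (by omega : j < n)
      have e1 : (j + 1 - i) = (j - i) + 1 := by omega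
      rw [e1, Nat.add_mul, Nat.add_mul, one_mul, one_mul]
      omega
    · have hij' : i = j := by omega
      subst hij'
      have hstep := alpha_step (a := a) hb hi (by omega : i < n)
      have e1 : (i + 1 - i) = 1 := by omega
      rw [e1, one_mul, one_mul]
      omega

/-! ### The representation lemma -/

lemma repr_lemma {b : ℕ} (hb : 1 < b) :
    ∀ K, 1 ≤ K → ∀ t, t < repunit b (K + 1) →
    ∃ c : ℕ → ℕ, (∑ k ∈ Finset.Icc 1 K, c k * repunit b k = t) ∧
      ((∀ k, c k ≤ b - 1) ∨
        ∃ i, 1 ≤ i ∧ i ≤ K ∧ c i = b ∧ (∀ k, k < i → c k = 0) ∧ (∀ k, i < k → c k ≤ b - 1)) := by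
  intro K
  induction K with
  | zero => omega
  | succ K ih =>
    intro _ t ht
    rcases Nat.eq_zero_or_pos K with hK | hK
    · subst hK
      have h2 : repunit b (0 + 1 + 1) = b + 1 := by
        rw [repunit_succ, repunit_one]; ring
      rw [h2] at ht
      refine ⟨Function.update (fun _ => 0) 1 t, ?_, ?_⟩
      · simp [repunit_one]
      · rcases Nat.lt_or_ge t b with h | h
        · left
          intro k
          by_cases hk : k = 1
          · subst hk; rw [Function.update_self]; omega
          · rw [Function.update_of_ne hk]; omega
        · right
          refine ⟨1, le_rfl, le_rfl, by rw [Function.update_self]; omega,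
            fun k hk => by rw [Function.update_of_ne (by omega)],
            fun k hk => by rw [Function.update_of_ne (by omega)]; omega⟩
    · have hR : 0 < repunit b (K + 1) := repunit_pos hb (K + 1) (by omega)
      set R := repunit b (K + 1) with hRdef
      have h1 : repunit b (K + 1 + 1) = b * R + 1 := repunit_succ b (K + 1)
      have hq : t / R ≤ b := by
        have h2 : t ≤ b * R := by omega
        calc t / R ≤ b * R / R := Nat.div_le_div_right h2
          _ = b := Nat.mul_div_cancel b hR
      rcases Nat.lt_or_ge (t / R) b with hqlt | hqge
      · obtain ⟨c, hsum, hc⟩ := ih hK (t % R) (Nat.mod_lt t hR)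
        refine ⟨Function.update c (K + 1) (t / R), ?_, ?_⟩
        · rw [Finset.sum_Icc_succ_top (by omega : 1 ≤ K + 1), Function.update_self]
          have heq : ∑ k ∈ Finset.Icc 1 K, (Function.update c (K + 1) (t / R)) k * repunit b k
              = ∑ k ∈ Finset.Icc 1 K, c k * repunit b k := by
            apply Finset.sum_congr rfl
            intro k hk
            simp only [Finset.mem_Icc] at hk
            rw [Function.update_of_ne (by omega)]
          rw [heq, hsum, ← hRdef]
          have h3 := Nat.div_add_mod t R
          have h4 : R * (t / R) = (t / R) * R := by ring
          omega
        · rcases hc with hall | ⟨i, hi1, hiK, hib, hlow, hhigh⟩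
          · left
            intro k
            by_cases hk : k = K + 1
            · subst hk; rw [Function.update_self]; omega
            · rw [Function.update_of_ne hk]; exact hall k
          · right
            refine ⟨i, hi1, by omega, by rw [Function.update_of_ne (by omega)]; exact hib, ?_, ?_⟩
            · intro k hk; rw [Function.update_of_ne (by omega)]; exact hlow k hk
            · intro k hk
              by_cases hk2 : k = K + 1
              · subst hk2; rw [Function.update_self]; omega
              · rw [Function.update_of_ne hk2]; exact hhigh k hk
      · have htb : t = b * R := by
          have h2 : b * R ≤ t := by
            calc b * R ≤ (t / R) * R := Nat.mul_le_mul_right R hqge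
              _ ≤ t := Nat.div_mul_le_self t R
          omega
        refine ⟨Function.update (fun _ => 0) (K + 1) b, ?_, ?_⟩
        · rw [Finset.sum_Icc_succ_top (by omega : 1 ≤ K + 1), Function.update_self]
          have heq : ∑ k ∈ Finset.Icc 1 K,
              (Function.update (fun _ => (0:ℕ)) (K + 1) b) k * repunit b k = 0 := by
            apply Finset.sum_eq_zero
            intro k hk
            simp only [Finset.mem_Icc] at hk
            rw [Function.update_of_ne (by omega)]
            ring
          rw [heq, htb, ← hRdef]
          ring
        · right
          exact ⟨K + 1, by omega, le_rfl, by rw [Function.update_self],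
            fun k hk => by rw [Function.update_of_ne (by omega)],
            fun k hk => by rw [Function.update_of_ne (by omega)]; omega⟩

/-- Reindexing sums from `Icc 2 n` to `Icc 1 (n-1)`. -/
lemma sum_shift {n : ℕ} (hn : 1 ≤ n) (g : ℕ → ℕ) :
    ∑ j ∈ Finset.Icc 2 n, g j = ∑ k ∈ Finset.Icc 1 (n - 1), g (k + 1) := by
  have h : Finset.Icc 2 n = (Finset.Icc 1 (n - 1)).map (addRightEmbedding 1) := by
    rw [Finset.map_add_right_Icc]
    congr 1
    omega
  rw [h, Finset.sum_map]
  rfl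

theorem stmt_10 (b a n : ℕ) (hb : 1 < b) (hn : 1 < n) (ha : 0 < a)
    (hgcd : Nat.gcd (repunit b n) a = 1) :
    (∀ i, 2 ≤ i → i ≤ n → alphaEl b a n i ∈ Apery (grep b a n) (repunit b n)) ∧
    (a < b ^ n - 1 →
      ∀ i j, 2 ≤ i → i < j → j ≤ n → alphaEl b a n j < alphaEl b a n i) ∧
    (a > b ^ n - 1 →
      ∀ i j, 2 ≤ i → i < j → j ≤ n → alphaEl b a n i < alphaEl b a n j) ∧
    (∀ ω ∈ Apery (grep b a n) (repunit b n),
      ∃ i, 2 ≤ i ∧ i ≤ n ∧ ω ≤ alphaEl b a n i) := by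
  set M := repunit b n with hMdef
  have hmul : (b - 1) * M + 1 = b ^ n := repunit_mul hb n
  have hM1 : 1 < M := by
    have h := repunit_succ b (n - 1)
    have hn1 : n - 1 + 1 = n := by omega
    rw [hn1] at h
    have := repunit_pos hb (n - 1) (by omega)
    rw [hMdef, h]
    have : 1 * 1 ≤ b * repunit b (n - 1) := Nat.mul_le_mul (by omega) this
    omega
  constructor
  · -- part (a)
    intro i h2i hin
    constructor
    · -- α_i ∈ S
      rw [alphaEl]
      refine AddSubmonoid.add_mem _ (aseq_mem i (by omega)) (mul_mem_grep _ ?_)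
      refine AddSubmonoid.sum_mem _ (fun j hj => ?_)
      simp only [Finset.mem_Icc] at hj
      exact aseq_mem j (by omega)
    · -- α_i - m ∉ S
      rintro ⟨t, htS, heq⟩
      obtain ⟨T, L, hrep, hpow⟩ := grep_repr hb htS
      rw [← hMdef] at hrep
      set len := L.length with hlen
      have hclosed := alpha_closed (a := a) hb (by omega : 1 ≤ n) (n - i) (by omega)
      have hni : n - (n - i) = i := by omega
      rw [hni, ← hMdef] at hclosed
      set u := n - i + 1 with hu
      set Ci := b + (b - 1) * (n - i) with hCi
      -- linear bookkeeping
      have e1 : a * (T + u) = a * T + a * u := by ring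
      have e2 : (len + 1) * M = len * M + M := by ring
      have e3 : (Ci + a) * M = Ci * M + a * M := by ring
      have hmain : a * (T + u) + (len + 1) * M = (Ci + a) * M := by
        omega
      have hlenle : len + 1 ≤ Ci + a := by
        by_contra hcon
        push_neg at hcon
        have : (Ci + a) * M < (len + 1) * M :=
          Nat.mul_lt_mul_of_pos_right hcon (by omega)
        omega
      set D := Ci + a - (len + 1) with hD
      have hDeq : a * (T + u) = D * M := by
        have e4 : D * M + (len + 1) * M = (Ci + a) * M := by
          rw [← Nat.add_mul]
          congr 1
          omega
        omega
      have hdm : a ∣ D * M := ⟨T + u, by rw [← hDeq]⟩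
      have haD : a ∣ D := Nat.Coprime.dvd_of_dvd_mul_right (Nat.Coprime.symm hgcd) hdm
      obtain ⟨q, hq⟩ := haD
      have hTu : T + u = q * M := by
        have : a * (T + u) = a * (q * M) := by rw [hDeq, hq]; ring
        exact Nat.eq_of_mul_eq_mul_left ha this
      obtain ⟨k, rfl⟩ : ∃ k, q = k + 1 := by
        refine ⟨q - 1, ?_⟩
        have : 1 ≤ u := by omega
        have : 1 ≤ q * M := by omega
        have : q ≠ 0 := by rintro rfl; omega
        omega
      have hlen2 : len + a * k = (b - 1) * u := by
        have e5 : a * (k + 1) = a * k + a := by ring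
        have e6 : (b - 1) * u = (b - 1) * (n - i) + (b - 1) := by rw [hu]; ring
        omega
      set N := (b - 1) * T + len with hN
      have hNsum : N + ((a + 1) * k + 1) = (k + 1) * b ^ n := by
        have e7 : (b - 1) * (T + u) = (b - 1) * T + (b - 1) * u := by ring
        have e8 : (b - 1) * ((k + 1) * M) = (k + 1) * ((b - 1) * M) := by ring
        have e9 : (k + 1) * ((b - 1) * M) + (k + 1) = (k + 1) * ((b - 1) * M + 1) := by ring
        have e10 : (a + 1) * k = a * k + k := by ring
        have e11 : (k + 1) * ((b - 1) * M + 1) = (k + 1) * b ^ n := by rw [hmul]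
        have e12 : (b - 1) * (T + u) = (b - 1) * ((k + 1) * M) := by rw [hTu]
        omega
      have hs1 : sb b N ≤ len := by
        rw [← hpow, ← hN] at *
        rw [← hpow]
        exact sb_list hb L
      have hbn1 : 1 ≤ b ^ n := Nat.one_le_pow n b (by omega)
      have hM' : k * b ^ n + (b ^ n - 1) = N + (a + 1) * k := by
        have : (k + 1) * b ^ n = k * b ^ n + b ^ n := by ring
        omega
      have hs2 : sb b (N + (a + 1) * k) = sb b k + n * (b - 1) := by
        rw [← hM', sb_allnines hb n k]
      have hs3 : sb b (N + (a + 1) * k) ≤ sb b N + sb b ((a + 1) * k) := sb_add_le' hb _ _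
      have hs4 : sb b ((a + 1) * k) ≤ a * k + sb b k := by
        have e10 : (a + 1) * k = a * k + k := by ring
        rw [e10]
        calc sb b (a * k + k) ≤ sb b (a * k) + sb b k := sb_add_le' hb _ _
          _ ≤ a * k + sb b k := by have := sb_le_self hb (a * k); omega
      -- contradiction
      have hfin : n * (b - 1) ≤ (b - 1) * u := by omega
      have hfin2 : (b - 1) * u ≤ (b - 1) * (n - 1) :=
        Nat.mul_le_mul_left (b - 1) (by omega)
      have hfin3 : n * (b - 1) = (b - 1) * (n - 1) + (b - 1) := by
        have : (b - 1) * (n - 1) + (b - 1) = (b - 1) * (n - 1 + 1) := by ring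
        rw [this]
        have hn1 : n - 1 + 1 = n := by omega
        rw [hn1]
        ring
      omega
  refine ⟨?_, ?_, ?_⟩
  · -- part (b), decreasing
    intro halt i j h2i hij hjn
    have hcmp := alpha_compare (a := a) (n := n) hb i j (by omega) hij hjn
    rw [← hMdef] at hcmp
    have hab : a < (b - 1) * M := by omega
    have : (j - i) * a < (j - i) * ((b - 1) * M) :=
      mul_lt_mul_of_pos_left hab (by omega)
    omega
  · -- part (b), increasing
    intro halt i j h2i hij hjn
    have hcmp := alpha_compare (a := a) (n := n) hb i j (by omega) hij hjn
    rw [← hMdef] at hcmp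
    have hab : (b - 1) * M < a := by omega
    have : (j - i) * ((b - 1) * M) < (j - i) * a :=
      mul_lt_mul_of_pos_left hab (by omega)
    omega
  · -- part (c)
    intro ω hω
    obtain ⟨hωS, hno⟩ := hω
    obtain ⟨v, -, hv⟩ := Nat.exists_mul_mod_eq_one_of_coprime (Nat.Coprime.symm hgcd) hM1
    set t := (v * ω) % M with htdef
    have ht : t < M := Nat.mod_lt _ (by omega)
    have hta : (a * t) % M = ω % M := by
      have h1 : a * t % M = (a * (v * ω)) % M := by
        rw [htdef, Nat.mul_mod, Nat.mod_mod_of_dvd, ← Nat.mul_mod]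
        exact dvd_refl M
      have h2 : a * (v * ω) = (a * v) * ω := by ring
      rw [h1, h2, Nat.mul_mod, hv, one_mul, Nat.mod_mod_of_dvd _ (dvd_refl M)]
    have hn1 : n - 1 + 1 = n := by omega
    have ht' : t < repunit b (n - 1 + 1) := by rw [hn1, ← hMdef]; exact ht
    obtain ⟨c, hsum, hc⟩ := repr_lemma hb (n - 1) (by omega) t ht'
    set w := ∑ j ∈ Finset.Icc 2 n, c (j - 1) * aseq b a n j with hwdef
    have hw_t : ∑ j ∈ Finset.Icc 2 n, c (j - 1) * repunit b (j - 1) = t := by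
      rw [sum_shift (by omega : 1 ≤ n)]
      simpa only [Nat.add_sub_cancel] using hsum
    have hwS : w ∈ grep b a n := by
      rw [hwdef]
      exact AddSubmonoid.sum_mem _ (fun j hj => by
        simp only [Finset.mem_Icc] at hj
        exact mul_mem_grep _ (aseq_mem j (by omega)))
    have hw_eq : w = (∑ j ∈ Finset.Icc 2 n, c (j - 1)) * M + a * t := by
      rw [hwdef]
      have h1 : ∀ j ∈ Finset.Icc 2 n, c (j - 1) * aseq b a n j
          = c (j - 1) * M + a * (c (j - 1) * repunit b (j - 1)) := by
        intro j hj
        rw [aseq, ← hMdef]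
        ring
      rw [Finset.sum_congr rfl h1, Finset.sum_add_distrib, ← Finset.sum_mul, ← Finset.mul_sum,
        hw_t]
    have hw_mod : w % M = (a * t) % M := by
      rw [hw_eq, add_comm, Nat.add_mul_mod_self_right]
    -- ω ≤ w
    have hωw : ω ≤ w := by
      by_contra hlt
      push_neg at hlt
      have hmod : w ≡ ω [MOD M] := by
        unfold Nat.ModEq
        rw [hw_mod, hta]
      have hdvd : M ∣ ω - w := (Nat.modEq_iff_dvd' (le_of_lt hlt)).mp hmod
      obtain ⟨d, hd⟩ := hdvd
      have hd1 : 1 ≤ d := by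
        rcases Nat.eq_zero_or_pos d with h | h
        · rw [h] at hd; omega
        · exact h
      apply hno
      refine ⟨w + (d - 1) * M, AddSubmonoid.add_mem _ hwS
        (mul_mem_grep (d - 1) (repunit_mem b a n)), ?_⟩
      have hdd : (d - 1) * M + M = d * M := by
        have h5 : (d - 1) * M + 1 * M = (d - 1 + 1) * M := by ring
        have h6 : d - 1 + 1 = d := by omega
        rw [h6] at h5
        omega
      have hMd : M * d = d * M := by ring
      omega
    -- w is bounded by some α_i
    rcases hc with hall | ⟨i, hi1, hiK, hib, hlow, hhigh⟩
    · -- all coefficients ≤ b - 1 : bound by α_2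
      refine ⟨2, le_rfl, by omega, le_trans hωw ?_⟩
      have hb1 : w ≤ (b - 1) * ∑ j ∈ Finset.Icc 2 n, aseq b a n j := by
        rw [hwdef, Finset.mul_sum]
        exact Finset.sum_le_sum (fun j hj => Nat.mul_le_mul_right _ (hall (j - 1)))
      calc w ≤ (b - 1) * ∑ j ∈ Finset.Icc 2 n, aseq b a n j := hb1
        _ ≤ alphaEl b a n 2 := Nat.le_add_left _ _
    · -- one coefficient equals b at position i : bound by α_{i+1}
      refine ⟨i + 1, by omega, by omega, le_trans hωw ?_⟩
      have hsub : w = ∑ j ∈ Finset.Icc (i + 1) n, c (j - 1) * aseq b a n j := by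
        rw [hwdef]
        refine (Finset.sum_subset (Finset.Icc_subset_Icc (by omega) le_rfl) ?_).symm
        intro j hj hj2
        simp only [Finset.mem_Icc] at hj hj2
        have : c (j - 1) = 0 := hlow (j - 1) (by omega)
        rw [this, zero_mul]
      have hin1 : i + 1 ≤ n := by omega
      rw [hsub, icc_split hin1]
      have hterm : c (i + 1 - 1) * aseq b a n (i + 1) = b * aseq b a n (i + 1) := by
        have h7 : i + 1 - 1 = i := by omega
        rw [h7, hib]
      have hrest : ∑ j ∈ Finset.Icc (i + 1 + 1) n, c (j - 1) * aseq b a n j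
          ≤ (b - 1) * ∑ j ∈ Finset.Icc (i + 1 + 1) n, aseq b a n j := by
        rw [Finset.mul_sum]
        refine Finset.sum_le_sum (fun j hj => ?_)
        simp only [Finset.mem_Icc] at hj
        exact Nat.mul_le_mul_right _ (hhigh (j - 1) (by omega))
      rw [alpha_split (by omega : 1 ≤ b) hin1, hterm]
      omega
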